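/- arXiv:2207.03967 — 2 statements merged into one kernel-verified Lean document; each statement's English description precedes it below -/
import Mathlib

section
/- Fix θ > 1/2 (θ ∈ ℕ suffices with θ ≥ 1). The uniformly local Sobolev space H^θ_{ul}(ℝ,ℝ) is an algebra: there exists a constant C (one may take C = 9) such that ‖uv‖_{H^θ_{ul}} ≤ C ‖u‖_{H^θ_{ul}} ‖v‖_{H^θ_{ul}} for all u, v ∈ H^θ_{ul}. -/
/-- The uniformly local `L²` norm
`‖u‖_{L²_ul} = sup_{y ∈ ℝ} (∫_{y-1/2}^{y+1/2} |u(x)|² dx)^{1/2}`. -/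
noncomputable def L2ulNorm (u : ℝ → ℝ) : ℝ :=
  ⨆ y : ℝ, Real.sqrt (∫ x in Set.Ioo (y - 1/2) (y + 1/2), (u x)^2)

/-- Membership in the uniformly local Sobolev space `H^θ_{ul}(ℝ,ℝ)`:
`u` is `θ`-times differentiable and all derivatives up to order `θ` lie in `L²_ul`. -/
def MemHul (θ : ℕ) (u : ℝ → ℝ) : Prop :=
  ContDiff ℝ (θ : ℕ∞) u ∧
  ∀ j ≤ θ, BddAbove (Set.range fun y : ℝ =>
    Real.sqrt (∫ x in Set.Ioo (y - 1/2) (y + 1/2), ((deriv^[j] u) x)^2))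

/-- The uniformly local Sobolev norm on `H^θ_{ul}`. -/
noncomputable def HulNorm (θ : ℕ) (u : ℝ → ℝ) : ℝ :=
  ∑ j ∈ Finset.range (θ + 1), L2ulNorm (deriv^[j] u)

/-! On a unit window a `C¹` function is bounded by twice the sum of the `L²` norms of itself and
of its derivative: take a point where `f²` lies below its mean and integrate
`(f²)' = 2 f f' ≤ f² + f'²` from there. So every derivative of order `< θ` of `u ∈ H^θ_ul` is
bounded by `4 ‖u‖`. In Leibniz' formula for `(uv)^{(j)}`, `j ≤ θ`, every term
`u^{(i)} v^{(j-i)}` has a factor of order `< θ`; bounding that factor pointwise and the other in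
`L²` of the window, Minkowski's inequality gives `‖(uv)^{(j)}‖ ≤ 2^j · 4 ‖u‖ ‖v‖` on every
window. -/

open MeasureTheory Set

noncomputable def windowNorm (f : ℝ → ℝ) (y : ℝ) : ℝ :=
  lpNorm f 2 (volume.restrict (Ioo (y - 1/2) (y + 1/2)))

lemma sqrt_integral_sq_eq_lpNorm {α : Type*} [MeasurableSpace α] {μ : Measure α} {f : α → ℝ}
    (hf : AEStronglyMeasurable f μ) : √(∫ x, f x ^ 2 ∂μ) = lpNorm f 2 μ := by
  rw [lpNorm_eq_integral_norm_rpow_toReal two_ne_zero ENNReal.ofNat_ne_top hf, Real.sqrt_eq_rpow]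
  simp

lemma Continuous.memLp_two_restrict_Ioo {f : ℝ → ℝ} (hf : Continuous f) (a b : ℝ) :
    MemLp f 2 (volume.restrict (Ioo a b)) :=
  (memLp_two_iff_integrable_sq hf.aestronglyMeasurable).2
    ((hf.pow 2).integrableOn_Icc.mono_set Ioo_subset_Icc_self)

lemma sqrt_integral_sq_eq_windowNorm {f : ℝ → ℝ} (hf : Continuous f) (y : ℝ) :
    √(∫ x in Ioo (y - 1/2) (y + 1/2), f x ^ 2) = windowNorm f y :=
  sqrt_integral_sq_eq_lpNorm hf.aestronglyMeasurable

lemma sq_sub_sq_le_integral {f : ℝ → ℝ} (hf : ContDiff ℝ 1 f) {a b x z : ℝ}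
    (hx : x ∈ Icc a b) (hz : z ∈ Icc a b) :
    f x ^ 2 - f z ^ 2 ≤ ∫ t in Ioo a b, (f t ^ 2 + deriv f t ^ 2) := by
  have hf' : Continuous (deriv f) := hf.continuous_deriv le_rfl
  have hc : Continuous f := hf.continuous
  have hftc : ∫ t in z..x, 2 * f t * deriv f t = f x ^ 2 - f z ^ 2 := by
    refine intervalIntegral.integral_eq_sub_of_hasDerivAt (f := fun s => f s ^ 2) (fun t _ => ?_)
      ((by fun_prop : Continuous fun t => 2 * f t * deriv f t).intervalIntegrable _ _)
    simpa using (hf.differentiable one_ne_zero t).hasDerivAt.fun_pow 2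
  have hamgm : ∀ t, ‖2 * f t * deriv f t‖ ≤ f t ^ 2 + deriv f t ^ 2 := fun t => by
    rw [Real.norm_eq_abs, abs_mul, abs_mul, abs_two, ← sq_abs (f t), ← sq_abs (deriv f t)]
    exact two_mul_le_add_sq _ _
  calc f x ^ 2 - f z ^ 2 ≤ ‖∫ t in z..x, 2 * f t * deriv f t‖ := hftc ▸ Real.le_norm_self _
    _ ≤ ∫ t in uIoc z x, ‖2 * f t * deriv f t‖ :=
        intervalIntegral.norm_integral_le_integral_norm_uIoc
    _ ≤ ∫ t in uIoc z x, (f t ^ 2 + deriv f t ^ 2) :=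
        setIntegral_mono (Continuous.integrableOn_Ioc (by fun_prop))
          (Continuous.integrableOn_Ioc (by fun_prop)) hamgm
    _ ≤ ∫ t in Ioc a b, (f t ^ 2 + deriv f t ^ 2) := by
        apply setIntegral_mono_set (Continuous.integrableOn_Ioc (by fun_prop))
          (.of_forall fun t => by positivity)
        exact (Ioc_subset_Ioc (le_min hz.1 hx.1) (max_le hz.2 hx.2)).eventuallyLE
    _ = ∫ t in Ioo a b, (f t ^ 2 + deriv f t ^ 2) := setIntegral_congr_set Ioo_ae_eq_Ioc.symm

lemma sq_le_integral_sq_add_integral_deriv_sq {f : ℝ → ℝ} (hf : ContDiff ℝ 1 f) (x : ℝ) :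
    f x ^ 2 ≤ 2 * (∫ t in Ioo (x - 1/2) (x + 1/2), f t ^ 2)
      + ∫ t in Ioo (x - 1/2) (x + 1/2), deriv f t ^ 2 := by
  have hint : ∀ g : ℝ → ℝ, Continuous g → IntegrableOn g (Ioo (x - 1/2) (x + 1/2)) :=
    fun g hg => hg.integrableOn_Icc.mono_set Ioo_subset_Icc_self
  have hvol : volume (Ioo (x - 1/2) (x + 1/2)) = 1 := by simp [Real.volume_Ioo]; norm_num
  have hc : Continuous f := hf.continuous
  have hc' : Continuous (deriv f) := hf.continuous_deriv le_rfl
  obtain ⟨z, hz, hfz⟩ := exists_le_setAverage (f := fun t => f t ^ 2) (by simp) (by simp)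
    (hint _ (by fun_prop))
  rw [setAverage_eq, measureReal_def, hvol, ENNReal.toReal_one, inv_one, one_smul] at hfz
  have hxz := sq_sub_sq_le_integral hf (x := x) (by constructor <;> linarith)
    (Ioo_subset_Icc_self hz)
  rw [integral_add (hint (fun t => f t ^ 2) (by fun_prop))
    (hint (fun t => deriv f t ^ 2) (by fun_prop))] at hxz
  linarith

lemma abs_le_two_mul_windowNorm_add {f : ℝ → ℝ} (hf : ContDiff ℝ 1 f) (x : ℝ) :
    |f x| ≤ 2 * (windowNorm f x + windowNorm (deriv f) x) := by
  rw [← sqrt_integral_sq_eq_windowNorm hf.continuous,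
    ← sqrt_integral_sq_eq_windowNorm (hf.continuous_deriv le_rfl)]
  set A := ∫ t in Ioo (x - 1/2) (x + 1/2), f t ^ 2
  set B := ∫ t in Ioo (x - 1/2) (x + 1/2), deriv f t ^ 2
  have hA : 0 ≤ A := setIntegral_nonneg measurableSet_Ioo fun t _ => sq_nonneg _
  have hB : 0 ≤ B := setIntegral_nonneg measurableSet_Ioo fun t _ => sq_nonneg _
  have := sq_le_integral_sq_add_integral_deriv_sq hf x
  apply abs_le_of_sq_le_sq _ (by positivity)
  nlinarith [Real.sq_sqrt hA, Real.sq_sqrt hB, Real.sqrt_nonneg A, Real.sqrt_nonneg B]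

lemma lpNorm_mul_le_of_abs_le {α : Type*} [MeasurableSpace α] {μ : Measure α} {p : ENNReal}
    {f g : α → ℝ} {M : ℝ} (hM : 0 ≤ M) (hf : ∀ x, |f x| ≤ M) (hg : MemLp g p μ) :
    lpNorm (f * g) p μ ≤ M * lpNorm g p μ := by
  calc lpNorm (f * g) p μ ≤ lpNorm (M • fun x => ‖g x‖) p μ :=
        lpNorm_mono_real (hg.norm.const_smul M) fun x => by
          simpa [abs_mul] using mul_le_mul_of_nonneg_right (hf x) (abs_nonneg (g x))
    _ = M * lpNorm g p μ := by
        rw [lpNorm_const_smul, lpNorm_norm hg.aestronglyMeasurable]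
        simp [abs_of_nonneg hM]

lemma l2ulNorm_nonneg (f : ℝ → ℝ) : 0 ≤ L2ulNorm f :=
  Real.iSup_nonneg fun _ => Real.sqrt_nonneg _

lemma hulNorm_nonneg (θ : ℕ) (u : ℝ → ℝ) : 0 ≤ HulNorm θ u :=
  Finset.sum_nonneg fun _ _ => l2ulNorm_nonneg _

lemma l2ulNorm_le_of_windowNorm_le {f : ℝ → ℝ} (hf : Continuous f) {M : ℝ}
    (h : ∀ y, windowNorm f y ≤ M) : L2ulNorm f ≤ M :=
  ciSup_le fun y => (sqrt_integral_sq_eq_windowNorm hf y).trans_le (h y)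

namespace MemHul

variable {θ : ℕ} {u : ℝ → ℝ}

lemma continuous_iteratedDeriv (hu : MemHul θ u) {j : ℕ} (hj : j ≤ θ) :
    Continuous (iteratedDeriv j u) :=
  hu.1.continuous_iteratedDeriv j (by exact_mod_cast hj)

lemma windowNorm_iteratedDeriv_le (hu : MemHul θ u) {j : ℕ} (hj : j ≤ θ) (y : ℝ) :
    windowNorm (iteratedDeriv j u) y ≤ HulNorm θ u := by
  rw [← sqrt_integral_sq_eq_windowNorm (hu.continuous_iteratedDeriv hj), iteratedDeriv_eq_iterate]
  calc _ ≤ L2ulNorm (deriv^[j] u) := le_ciSup (hu.2 j hj) y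
    _ ≤ HulNorm θ u := Finset.single_le_sum (f := fun k => L2ulNorm (deriv^[k] u))
          (fun k _ => l2ulNorm_nonneg _) (Finset.mem_range.2 (Nat.lt_succ_of_le hj))

lemma abs_iteratedDeriv_le (hu : MemHul θ u) {i : ℕ} (hi : i < θ) (x : ℝ) :
    |iteratedDeriv i u x| ≤ 4 * HulNorm θ u := by
  have hC1 : ContDiff ℝ 1 (iteratedDeriv i u) := contDiff_one_iff_deriv.2
    ⟨hu.1.differentiable_iteratedDeriv i (by exact_mod_cast hi),
      by rw [← iteratedDeriv_succ]; exact hu.continuous_iteratedDeriv hi⟩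
  have := abs_le_two_mul_windowNorm_add hC1 x
  rw [← iteratedDeriv_succ] at this
  linarith [hu.windowNorm_iteratedDeriv_le hi.le x, hu.windowNorm_iteratedDeriv_le hi x]

end MemHul

lemma memHul_of_windowNorm_le {θ : ℕ} {u : ℝ → ℝ} (hu : ContDiff ℝ θ u) {M : ℝ}
    (h : ∀ j ≤ θ, ∀ y, windowNorm (iteratedDeriv j u) y ≤ M) : MemHul θ u := by
  refine ⟨hu, fun j hj => ⟨M, ?_⟩⟩
  rintro _ ⟨y, rfl⟩
  have hc := hu.continuous_iteratedDeriv j (by exact_mod_cast hj)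
  rw [← iteratedDeriv_eq_iterate]
  exact (sqrt_integral_sq_eq_windowNorm hc y).trans_le (h j hj y)

lemma hulNorm_le_of_windowNorm_le {θ : ℕ} {u : ℝ → ℝ} (hu : ContDiff ℝ θ u) {M : ℝ}
    (h : ∀ j ≤ θ, ∀ y, windowNorm (iteratedDeriv j u) y ≤ M) : HulNorm θ u ≤ (θ + 1) * M := by
  calc HulNorm θ u ≤ ∑ _j ∈ Finset.range (θ + 1), M := by
        refine Finset.sum_le_sum fun j hj => ?_
        have hj : j ≤ θ := Nat.lt_succ_iff.1 (Finset.mem_range.1 hj)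
        rw [← iteratedDeriv_eq_iterate]
        exact l2ulNorm_le_of_windowNorm_le (hu.continuous_iteratedDeriv j (by exact_mod_cast hj))
          (h j hj)
    _ = (θ + 1) * M := by simp

lemma iteratedDeriv_mul_eq_sum {f g : ℝ → ℝ} {n : ℕ} (hf : ContDiff ℝ n f)
    (hg : ContDiff ℝ n g) :
    iteratedDeriv n (f * g) = ∑ i ∈ Finset.range (n + 1),
      (n.choose i : ℝ) • (iteratedDeriv i f * iteratedDeriv (n - i) g) := by
  ext x
  rw [iteratedDeriv_mul hf.contDiffAt hg.contDiffAt]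
  simp [Finset.sum_apply, mul_assoc]

section Product

open Finset

variable {θ : ℕ} {u v : ℝ → ℝ}

lemma windowNorm_iteratedDeriv_mul_iteratedDeriv_le (hθ : 1 ≤ θ) (hu : MemHul θ u)
    (hv : MemHul θ v) {i k : ℕ} (hik : i + k ≤ θ) (y : ℝ) :
    windowNorm (iteratedDeriv i u * iteratedDeriv k v) y ≤ 4 * HulNorm θ u * HulNorm θ v := by
  have hu0 := hulNorm_nonneg θ u
  have hv0 := hulNorm_nonneg θ v
  -- as `i + k ≤ θ < 2 θ`, one of the two factors is bounded pointwise
  rcases lt_or_ge i θ with hi | hi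
  · calc _ ≤ 4 * HulNorm θ u * windowNorm (iteratedDeriv k v) y := by
          apply lpNorm_mul_le_of_abs_le (by positivity) (hu.abs_iteratedDeriv_le hi)
          exact (hv.continuous_iteratedDeriv (by omega)).memLp_two_restrict_Ioo _ _
      _ ≤ 4 * HulNorm θ u * HulNorm θ v := by
          gcongr; exact hv.windowNorm_iteratedDeriv_le (by omega) y
  · calc _ = windowNorm (iteratedDeriv k v * iteratedDeriv i u) y := by rw [mul_comm]
      _ ≤ 4 * HulNorm θ v * windowNorm (iteratedDeriv i u) y := by
          apply lpNorm_mul_le_of_abs_le (by positivity) (hv.abs_iteratedDeriv_le (by omega))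
          exact (hu.continuous_iteratedDeriv (by omega)).memLp_two_restrict_Ioo _ _
      _ ≤ 4 * HulNorm θ u * HulNorm θ v := by
          rw [mul_right_comm]
          gcongr; exact hu.windowNorm_iteratedDeriv_le (by omega) y

lemma windowNorm_iteratedDeriv_mul_le (hθ : 1 ≤ θ) (hu : MemHul θ u) (hv : MemHul θ v)
    {j : ℕ} (hj : j ≤ θ) (y : ℝ) :
    windowNorm (iteratedDeriv j (u * v)) y ≤ 2 ^ j * (4 * HulNorm θ u * HulNorm θ v) := by
  have hcont : ∀ i ∈ range (j + 1),
      Continuous (iteratedDeriv i u * iteratedDeriv (j - i) v) := fun i hi => by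
    have := mem_range.1 hi
    exact (hu.continuous_iteratedDeriv (by omega)).mul (hv.continuous_iteratedDeriv (by omega))
  calc windowNorm (iteratedDeriv j (u * v)) y
      ≤ ∑ i ∈ range (j + 1),
          (j.choose i : ℝ) * windowNorm (iteratedDeriv i u * iteratedDeriv (j - i) v) y := by
        rw [iteratedDeriv_mul_eq_sum (hu.1.of_le (by exact_mod_cast hj))
          (hv.1.of_le (by exact_mod_cast hj))]
        have hmem := fun i hi =>
          ((hcont i hi).const_smul (j.choose i : ℝ)).memLp_two_restrict_Ioo (y - 1/2) (y + 1/2)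
        refine (lpNorm_sum_le hmem one_le_two).trans_eq (sum_congr rfl fun i _ => ?_)
        rw [lpNorm_const_smul]
        simp [windowNorm]
    _ ≤ ∑ i ∈ range (j + 1), (j.choose i : ℝ) * (4 * HulNorm θ u * HulNorm θ v) := by
        gcongr with i hi
        exact windowNorm_iteratedDeriv_mul_iteratedDeriv_le hθ hu hv
          (by have := mem_range.1 hi; omega) y
    _ = 2 ^ j * (4 * HulNorm θ u * HulNorm θ v) := by
        rw [← sum_mul, ← Nat.cast_sum, Nat.sum_range_choose]
        norm_num

end Product

theorem stmt10 (θ : ℕ) (hθ : 1 ≤ θ) :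
    ∃ C : ℝ, 0 < C ∧ ∀ u v : ℝ → ℝ, MemHul θ u → MemHul θ v →
      MemHul θ (fun x => u x * v x) ∧
      HulNorm θ (fun x => u x * v x) ≤ C * HulNorm θ u * HulNorm θ v := by
  refine ⟨(θ + 1) * 2 ^ θ * 4, by positivity, fun u v hu hv => ?_⟩
  have huv : ContDiff ℝ θ (u * v) := hu.1.mul hv.1
  have hbound : ∀ j ≤ θ, ∀ y, windowNorm (iteratedDeriv j (u * v)) y
      ≤ 2 ^ θ * (4 * HulNorm θ u * HulNorm θ v) := fun j hj y =>
    (windowNorm_iteratedDeriv_mul_le hθ hu hv hj y).trans <| by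
      have := hulNorm_nonneg θ u; have := hulNorm_nonneg θ v
      gcongr; norm_num
  exact ⟨memHul_of_windowNorm_le huv hbound,
    (hulNorm_le_of_windowNorm_le huv hbound).trans_eq (by ring)⟩
end

section
/- Let u ∈ H^{θ+1}_{ul}(ℝ,ℝ) and r ≥ 0. Then the rescaled function x ↦ u(rx) lies in H^θ_{ul}(ℝ,ℝ) with ‖x ↦ u(rx)‖_{L²_{ul}} ≤ ‖u‖_{C⁰_b} ≤ C ‖u‖_{H¹_{ul}} for a universal constant C. -/
/-! For `u ∈ C¹` and `x, y` in the unit window around `x`, the fundamental theorem of calculus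
applied to `u²` and `2|u u'| ≤ u² + u'²` give `u(x)² ≤ u(y)² + ∫ (u² + u'²)`; averaging over
`y` yields `|u(x)| ≤ 2 (‖u‖_{L²_ul} + ‖u'‖_{L²_ul})`, the embedding `H¹_ul ⊂ C⁰_b`. Since
`x ↦ u(rx)` is sampled from the values of `u`, its local `L²` norms are bounded by `sup |u|`,
and its derivatives `r^j u^{(j)}(r·)` are bounded in the same way, which gives membership in
`H^θ_ul`. -/

open MeasureTheory Set

/-- `L2ulNorm f` is definitionally `⨆ y, localL2Norm f y`, and the bounds in `MemHul` are
`BddAbove (range (localL2Norm (deriv^[j] u)))`. -/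
noncomputable def localL2Norm (f : ℝ → ℝ) (y : ℝ) : ℝ :=
  √(∫ x in Ioo (y - 1/2) (y + 1/2), f x ^ 2)

lemma volume_real_Ioo_window (y : ℝ) : volume.real (Ioo (y - 1/2) (y + 1/2)) = 1 := by
  rw [measureReal_def, Real.volume_Ioo]
  norm_num

lemma localL2Norm_le_of_abs_le {f : ℝ → ℝ} (hf : Continuous f) {K : ℝ} (hK : ∀ x, |f x| ≤ K)
    (y : ℝ) : localL2Norm f y ≤ K := by
  have hK₀ : 0 ≤ K := (abs_nonneg _).trans (hK 0)
  have hsq : ∀ x, f x ^ 2 ≤ K ^ 2 := fun x => by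
    simpa only [sq_abs] using pow_le_pow_left₀ (abs_nonneg _) (hK x) 2
  refine (Real.sqrt_le_left hK₀).mpr ?_
  calc ∫ x in Ioo (y - 1/2) (y + 1/2), f x ^ 2
      ≤ ∫ _ in Ioo (y - 1/2) (y + 1/2), K ^ 2 :=
        setIntegral_mono_on ((hf.pow 2).integrableOn_Icc.mono_set Ioo_subset_Icc_self)
          (integrableOn_const measure_Ioo_lt_top.ne) measurableSet_Ioo fun x _ => hsq x
    _ = K ^ 2 := by rw [setIntegral_const, volume_real_Ioo_window, one_smul]

lemma L2ulNorm_le_of_abs_le {f : ℝ → ℝ} (hf : Continuous f) {K : ℝ} (hK : ∀ x, |f x| ≤ K) :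
    L2ulNorm f ≤ K :=
  ciSup_le (localL2Norm_le_of_abs_le hf hK)

lemma abs_two_mul_mul_le_sq_add_sq (a b : ℝ) : |2 * a * b| ≤ a ^ 2 + b ^ 2 := by
  rw [abs_le]
  constructor <;> nlinarith [sq_nonneg (a + b), sq_nonneg (a - b)]

lemma sq_sub_sq_le_setIntegral_Ioo {u : ℝ → ℝ} (hu : ContDiff ℝ 1 u) {a b x y : ℝ}
    (hx : x ∈ Ioo a b) (hy : y ∈ Ioo a b) :
    u x ^ 2 - u y ^ 2 ≤ ∫ t in Ioo a b, (u t ^ 2 + deriv u t ^ 2) := by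
  have hu' : Continuous (deriv u) := hu.continuous_deriv le_rfl
  have hcont : Continuous fun t => 2 * u t * deriv u t :=
    (continuous_const.mul hu.continuous).mul hu'
  have hderiv : ∀ t, HasDerivAt (fun s => u s ^ 2) (2 * u t * deriv u t) t := fun t => by
    simpa using ((hu.differentiable one_ne_zero) t).hasDerivAt.fun_pow 2
  have hsub : uIoc y x ⊆ Ioo a b :=
    Ioc_subset_Icc_self.trans (ordConnected_Ioo.uIcc_subset hy hx)
  calc u x ^ 2 - u y ^ 2 = ∫ t in y..x, 2 * u t * deriv u t :=
        (intervalIntegral.integral_eq_sub_of_hasDerivAt (fun t _ => hderiv t)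
          (hcont.intervalIntegrable _ _)).symm
    _ ≤ ∫ t in uIoc y x, |2 * u t * deriv u t| :=
        (le_abs_self _).trans <| by
          simpa only [Real.norm_eq_abs] using
            intervalIntegral.norm_integral_le_integral_norm_uIoc (f := fun t => 2 * u t * deriv u t)
    _ ≤ ∫ t in Ioo a b, |2 * u t * deriv u t| :=
        setIntegral_mono_set (hcont.abs.integrableOn_Icc.mono_set Ioo_subset_Icc_self)
          (Filter.Eventually.of_forall fun _ => abs_nonneg _) hsub.eventuallyLE
    _ ≤ ∫ t in Ioo a b, (u t ^ 2 + deriv u t ^ 2) :=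
        setIntegral_mono_on (hcont.abs.integrableOn_Icc.mono_set Ioo_subset_Icc_self)
          (((hu.continuous.pow 2).add (hu'.pow 2)).integrableOn_Icc.mono_set Ioo_subset_Icc_self)
          measurableSet_Ioo fun t _ => abs_two_mul_mul_le_sq_add_sq _ _

lemma sq_le_two_mul_integral_add_integral_deriv {u : ℝ → ℝ} (hu : ContDiff ℝ 1 u) (x : ℝ) :
    u x ^ 2 ≤ 2 * (∫ t in Ioo (x - 1/2) (x + 1/2), u t ^ 2)
      + ∫ t in Ioo (x - 1/2) (x + 1/2), deriv u t ^ 2 := by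
  set I := Ioo (x - 1/2) (x + 1/2)
  have hx : x ∈ I := ⟨by linarith, by linarith⟩
  have hu₂ : IntegrableOn (fun t => u t ^ 2) I :=
    (hu.continuous.pow 2).integrableOn_Icc.mono_set Ioo_subset_Icc_self
  have hu'₂ : IntegrableOn (fun t => deriv u t ^ 2) I :=
    ((hu.continuous_deriv le_rfl).pow 2).integrableOn_Icc.mono_set Ioo_subset_Icc_self
  have haverage : (u x ^ 2 - ∫ t in I, (u t ^ 2 + deriv u t ^ 2)) * volume.real I
      ≤ ∫ t in I, u t ^ 2 :=
    setIntegral_ge_of_const_le_real measurableSet_Ioo measure_Ioo_lt_top.ne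
      (fun y hy => by linarith [sq_sub_sq_le_setIntegral_Ioo hu hx hy]) hu₂
  rw [volume_real_Ioo_window, mul_one, integral_add hu₂ hu'₂] at haverage
  linarith

lemma abs_le_two_mul_L2ulNorm_add {u : ℝ → ℝ} (hu : ContDiff ℝ 1 u)
    (h₀ : BddAbove (range (localL2Norm u))) (h₁ : BddAbove (range (localL2Norm (deriv u))))
    (x : ℝ) : |u x| ≤ 2 * (L2ulNorm u + L2ulNorm (deriv u)) := by
  have hA : localL2Norm u x ≤ L2ulNorm u := le_ciSup h₀ x
  have hB : localL2Norm (deriv u) x ≤ L2ulNorm (deriv u) := le_ciSup h₁ x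
  have hA₀ : 0 ≤ L2ulNorm u := (Real.sqrt_nonneg _).trans hA
  have hB₀ : 0 ≤ L2ulNorm (deriv u) := (Real.sqrt_nonneg _).trans hB
  rw [localL2Norm, Real.sqrt_le_left hA₀] at hA
  rw [localL2Norm, Real.sqrt_le_left hB₀] at hB
  refine abs_le_of_sq_le_sq ?_ (by positivity)
  nlinarith [sq_le_two_mul_integral_add_integral_deriv hu x, mul_nonneg hA₀ hB₀]

lemma MemHul.mono {m n : ℕ} {u : ℝ → ℝ} (hu : MemHul n u) (hmn : m ≤ n) : MemHul m u :=
  ⟨hu.1.of_le (by exact_mod_cast hmn), fun j hj => hu.2 j (hj.trans hmn)⟩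

lemma MemHul.contDiff_iterate_deriv {θ j : ℕ} {u : ℝ → ℝ} (hu : MemHul (θ + 1) u) (hj : j ≤ θ) :
    ContDiff ℝ 1 (deriv^[j] u) :=
  ContDiff.iterate_deriv' 1 j (hu.1.of_le (by exact_mod_cast (by omega : 1 + j ≤ θ + 1)))

lemma MemHul.abs_iterate_deriv_le {θ j : ℕ} {u : ℝ → ℝ} (hu : MemHul (θ + 1) u) (hj : j ≤ θ)
    (x : ℝ) : |deriv^[j] u x| ≤ 2 * (L2ulNorm (deriv^[j] u) + L2ulNorm (deriv^[j + 1] u)) := by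
  have hbdd : BddAbove (range (localL2Norm (deriv^[j + 1] u))) := hu.2 (j + 1) (by omega)
  rw [Function.iterate_succ_apply'] at hbdd ⊢
  exact abs_le_two_mul_L2ulNorm_add (hu.contDiff_iterate_deriv hj) (hu.2 j (by omega)) hbdd x

lemma abs_le_two_mul_HulNorm_one {u : ℝ → ℝ} (hu : MemHul 1 u) (x : ℝ) :
    |u x| ≤ 2 * HulNorm 1 u := by
  simpa only [HulNorm, Finset.sum_range_succ, Finset.sum_range_zero, zero_add,
    Function.iterate_zero, id] using hu.abs_iterate_deriv_le (θ := 0) le_rfl x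

lemma memHul_comp_mul {θ : ℕ} {u : ℝ → ℝ} (hu : MemHul (θ + 1) u) (r : ℝ) :
    MemHul θ (fun x => u (r * x)) := by
  refine ⟨(hu.mono θ.le_succ).1.comp (contDiff_const.mul contDiff_id), fun j hj => ?_⟩
  have hrescale : deriv^[j] (fun x => u (r * x)) = fun x => r ^ j * deriv^[j] u (r * x) := by
    simpa only [iteratedDeriv_eq_iterate] using
      iteratedDeriv_comp_const_mul (hu.1.of_le (by exact_mod_cast (by omega : j ≤ θ + 1))) r
  have hcont : Continuous fun x => r ^ j * deriv^[j] u (r * x) :=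
    continuous_const.mul ((hu.contDiff_iterate_deriv hj).continuous.comp
      (continuous_const.mul continuous_id))
  have hbound : ∀ x, |r ^ j * deriv^[j] u (r * x)|
      ≤ |r| ^ j * (2 * (L2ulNorm (deriv^[j] u) + L2ulNorm (deriv^[j + 1] u))) := fun x => by
    rw [abs_mul, abs_pow]
    exact mul_le_mul_of_nonneg_left (hu.abs_iterate_deriv_le hj _) (by positivity)
  rw [hrescale]
  exact ⟨_, forall_mem_range.2 (localL2Norm_le_of_abs_le hcont hbound)⟩

theorem stmt11 :
    ∃ C : ℝ, 0 < C ∧ ∀ (θ : ℕ) (u : ℝ → ℝ) (r : ℝ),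
      MemHul (θ + 1) u → 0 ≤ r →
        MemHul θ (fun x => u (r * x)) ∧
        L2ulNorm (fun x => u (r * x)) ≤ (⨆ x : ℝ, |u x|) ∧
        (⨆ x : ℝ, |u x|) ≤ C * HulNorm 1 u := by
  refine ⟨2, two_pos, fun θ u r hu _ => ?_⟩
  have hsup : ∀ x, |u x| ≤ 2 * HulNorm 1 u :=
    abs_le_two_mul_HulNorm_one (hu.mono (by omega))
  have hbdd : BddAbove (range fun x => |u x|) := ⟨_, forall_mem_range.2 hsup⟩
  refine ⟨memHul_comp_mul hu r, ?_, ciSup_le hsup⟩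
  exact L2ulNorm_le_of_abs_le (hu.1.continuous.comp (continuous_const.mul continuous_id))
    fun x => le_ciSup hbdd (r * x)
end
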